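/- Let K be a finite simplicial complex with an injective filtration function f, and for each ε > 0 let Π_ε be the set of simplex orderings induced by injective filtration functions within sup-distance ε of f. If t > 0 is a point of discontinuity of ε ↦ Π_ε (i.e., Π_ε ≠ Π_t for all ε > t), then there exist distinct simplices σ, τ of K with 2t = |f(σ) − f(τ)|. -/

import Mathlib

open scoped BigOperators

/-- A finite simplicial complex on vertex type `V`: a finite family of nonempty
finite vertex sets closed under passing to nonempty subsets. -/
structure SComplex (V : Type*) where
  faces : Finset (Finset V)
  nonempty_of_mem : ∀ s ∈ faces, s.Nonempty
  down_closed : ∀ s ∈ faces, ∀ t ⊆ s, t.Nonempty → t ∈ faces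

variable {V : Type*} [LinearOrder V]

/-- `f` is an injective filtration function on `K`: face-monotone and injective on faces. -/
def SCIsFiltration (K : SComplex V) (f : Finset V → ℝ) : Prop :=
  (∀ s ∈ K.faces, ∀ t ∈ K.faces, s ⊆ t → f s ≤ f t) ∧
  (∀ s ∈ K.faces, ∀ t ∈ K.faces, f s = f t → s = t)

/-- The sup-distance between `f` and `g` over the faces of `K` is at most `ε`. -/
def DistLE (K : SComplex V) (f g : Finset V → ℝ) (ε : ℝ) : Prop :=
  ∀ s ∈ K.faces, |f s - g s| ≤ ε

/-- The sublevel subcomplex `K^f_r = f⁻¹((-∞, r])`. -/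
noncomputable def sublevel (K : SComplex V) (f : Finset V → ℝ) (r : ℝ) : Finset (Finset V) :=
  K.faces.filter (fun s => f s ≤ r)

variable (𝔽 : Type*) [Field 𝔽]

/-- The simplicial boundary operator on chains (finitely supported functions on
simplices), with signs determined by the linear order on vertices. -/
noncomputable def bdry : (Finset V →₀ 𝔽) →ₗ[𝔽] (Finset V →₀ 𝔽) :=
  Finsupp.lsum 𝔽 (fun s => ∑ x ∈ s,
    ((-1 : 𝔽) ^ (s.filter (fun y => y < x)).card) • Finsupp.lsingle (s.erase x))

/-- The submodule of `n`-chains supported on simplices of `L` (of cardinality `n+1`). -/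
def chainsIn (L : Finset (Finset V)) (n : ℕ) : Submodule 𝔽 (Finset V →₀ 𝔽) where
  carrier := {c | ∀ s ∈ c.support, s ∈ L ∧ s.card = n + 1}
  add_mem' := by
    intro c d hc hd s hs
    rcases Finset.mem_union.mp (Finsupp.support_add hs) with h | h
    · exact hc s h
    · exact hd s h
  zero_mem' := by intro s hs; simp at hs
  smul_mem' := by
    intro a c hc s hs
    exact hc s (Finsupp.support_smul hs)

/-- `n`-cycles supported in `L`. -/
noncomputable def cyclesIn (L : Finset (Finset V)) (n : ℕ) : Submodule 𝔽 (Finset V →₀ 𝔽) :=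
  chainsIn 𝔽 L n ⊓ LinearMap.ker (bdry 𝔽)

/-- `n`-boundaries of `(n+1)`-chains supported in `L`. -/
noncomputable def boundariesIn (L : Finset (Finset V)) (n : ℕ) : Submodule 𝔽 (Finset V →₀ 𝔽) :=
  (chainsIn 𝔽 L (n + 1)).map (bdry 𝔽)

/-- `α` is an `n`-cycle in the subcomplex `L`. -/
def IsCycleIn (L : Finset (Finset V)) (n : ℕ) (α : Finset V →₀ 𝔽) : Prop :=
  α ∈ cyclesIn 𝔽 L n

/-- The class of `α` is trivial in `H_n(L)`. -/
def TrivialIn (L : Finset (Finset V)) (n : ℕ) (α : Finset V →₀ 𝔽) : Prop :=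
  α ∈ boundariesIn 𝔽 L n

/-- `α` and `β` are homologous in `L`. -/
def HomologousIn (L : Finset (Finset V)) (n : ℕ) (α β : Finset V →₀ 𝔽) : Prop :=
  α - β ∈ boundariesIn 𝔽 L n

/-- The homology class `[α] ∈ H_n(K^f_a)` is born at `a`: it is a nontrivial cycle
at level `a` and does not come from any strictly earlier level. -/
def BornAt (K : SComplex V) (f : Finset V → ℝ) (n : ℕ) (α : Finset V →₀ 𝔽) (a : ℝ) : Prop :=
  IsCycleIn 𝔽 (sublevel K f a) n α ∧ ¬ TrivialIn 𝔽 (sublevel K f a) n α ∧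
  ∀ q < a, ¬ ∃ β, IsCycleIn 𝔽 (sublevel K f q) n β ∧ HomologousIn 𝔽 (sublevel K f a) n α β

/-- The class `[α]` terminates at level `b` in the filtration `K^f`. -/
def TerminatesAt (K : SComplex V) (f : Finset V → ℝ) (n : ℕ) (α : Finset V →₀ 𝔽) (b : ℝ) : Prop :=
  TrivialIn 𝔽 (sublevel K f b) n α ∧ ∀ q < b, ¬ TrivialIn 𝔽 (sublevel K f q) n α

/-- `Δ` is the terminal simplex of `[α]` in the filtration `K^f`: the simplex added
at the level where `[α]` terminates. -/
def TerminalSimplex (K : SComplex V) (f : Finset V → ℝ) (n : ℕ) (α : Finset V →₀ 𝔽)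
    (Δ : Finset V) : Prop :=
  Δ ∈ K.faces ∧ TerminatesAt 𝔽 K f n α (f Δ)

/-- `Σ_ε`: the set of terminal simplices of `[α]` over all injective filtration
functions within sup-distance `ε` of `f`. -/
def TermSet (K : SComplex V) (f : Finset V → ℝ) (n : ℕ) (α : Finset V →₀ 𝔽) (ε : ℝ) :
    Set (Finset V) :=
  {Δ | ∃ g, SCIsFiltration K g ∧ DistLE K f g ε ∧ TerminalSimplex 𝔽 K g n α Δ}

/-- `τ` gives birth to a class in `H_n(K^f)`. -/
def IsBirthSimplex (K : SComplex V) (f : Finset V → ℝ) (n : ℕ) (τ : Finset V) : Prop :=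
  τ ∈ K.faces ∧ ∃ β : Finset V →₀ 𝔽, BornAt 𝔽 K f n β (f τ)

/-- `τ` terminates a class in `H_n(K^f)`. -/
def IsTerminalSimplexOf (K : SComplex V) (f : Finset V → ℝ) (n : ℕ) (τ : Finset V) : Prop :=
  τ ∈ K.faces ∧ ∃ (β : Finset V →₀ 𝔽) (a : ℝ),
    BornAt 𝔽 K f n β a ∧ TerminatesAt 𝔽 K f n β (f τ)

/-- The linear order on the faces of `K` induced by `g`. -/
def inducedRel (K : SComplex V) (g : Finset V → ℝ) :
    {s // s ∈ K.faces} → {s // s ∈ K.faces} → Prop :=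
  fun s t => g s.1 < g t.1

/-- `Π_ε`: the set of orders on the faces of `K` induced by injective filtration
functions within sup-distance `ε` of `f`. -/
def OrderSet (K : SComplex V) (f : Finset V → ℝ) (ε : ℝ) :
    Set ({s // s ∈ K.faces} → {s // s ∈ K.faces} → Prop) :=
  {r | ∃ g, SCIsFiltration K g ∧ DistLE K f g ε ∧ r = inducedRel K g}

/-- `f` is generic: equal absolute differences of `f`-values occur only for the
same unordered pair of faces. -/
def Generic (K : SComplex V) (f : Finset V → ℝ) : Prop :=
  ∀ s ∈ K.faces, ∀ t ∈ K.faces, ∀ s' ∈ K.faces, ∀ t' ∈ K.faces,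
    s ≠ t → s' ≠ t' → |f s - f t| = |f s' - f t'| →
    (s = s' ∧ t = t') ∨ (s = t' ∧ t = s')

/-- The rank of the map `H_n(K^f_p) → H_n(K^f_q)`, realized as the dimension of
the image of the cycles at level `p` in the quotient by boundaries at level `q`. -/
noncomputable def persRank (K : SComplex V) (f : Finset V → ℝ) (n : ℕ) (p q : ℝ) : ℕ :=
  Module.finrank 𝔽
    ↥(Submodule.map (boundariesIn 𝔽 (sublevel K f q) n).mkQ (cyclesIn 𝔽 (sublevel K f p) n))

/-- `[a, b)` is a bar of the `n`-th persistence module of `K^f`: the standard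
inclusion–exclusion of ranks equals `1` for all sufficiently small offsets. -/
def IsBar (K : SComplex V) (f : Finset V → ℝ) (n : ℕ) (a b : ℝ) : Prop :=
  a < b ∧ ∃ δ > 0, ∀ ε : ℝ, 0 < ε → ε < δ →
    persRank 𝔽 K f n a (b - ε) + persRank 𝔽 K f n (a - ε) b
      = persRank 𝔽 K f n a b + persRank 𝔽 K f n (a - ε) (b - ε) + 1

/-! If `2 t` is not a difference `f σ - f τ`, then for `ε > t` close enough to `t` no such
difference lies in `(2 t, 2 ε]`. An order realized by some `g` within `ε` of `f` puts `σ` before `τ`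
only if `f σ - f τ ≤ 2 ε`, hence only if `f σ - f τ < 2 t`, and any order with this property is
realized within `t` of `f` by `s ↦ max {f σ - t | σ not after s} + η · #{σ not after s}` for small
`η > 0`. Hence `Π_ε = Π_t`. -/

open Filter Topology Finset

section Realization

variable {ι : Type*} {S : Finset ι} {f g : ι → ℝ} {t : ℝ}

theorem exists_abs_sub_le_of_sub_lt_two_mul
    (hgap : ∀ σ ∈ S, ∀ τ ∈ S, g σ ≤ g τ → f σ - f τ < 2 * t) :
    ∃ h : ι → ℝ, (∀ σ ∈ S, ∀ τ ∈ S, g σ < g τ → h σ < h τ) ∧ ∀ s ∈ S, |f s - h s| ≤ t := by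
  classical
  have hsmall : ∀ᶠ η in 𝓝[>] (0 : ℝ),
      ∀ p ∈ S ×ˢ S, g p.1 ≤ g p.2 → f p.1 - f p.2 + #S * η < 2 * t := by
    refine (eventually_all_finset _).2 fun p hp => eventually_imp_distrib_left.2 fun hle => ?_
    have hcont : Tendsto (fun η : ℝ => f p.1 - f p.2 + #S * η) (𝓝[>] 0) (𝓝 (f p.1 - f p.2)) :=
      tendsto_nhdsWithin_of_tendsto_nhds ((Continuous.tendsto' (by fun_prop) 0 _) (by simp))
    exact hcont.eventually_lt_const (hgap _ (mem_product.1 hp).1 _ (mem_product.1 hp).2 hle)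
  obtain ⟨η, hη_slack, hη_pos⟩ := (hsmall.and self_mem_nhdsWithin).exists
  let pred : ι → Finset ι := fun s => S.filter fun σ => g σ ≤ g s
  let h : ι → ℝ := fun s =>
    (insert s (pred s)).sup' (insert_nonempty _ _) (fun σ => f σ - t) + #(pred s) * η
  refine ⟨h, fun σ hσ τ hτ hlt => ?_, fun s hs => ?_⟩
  · have hpred : pred σ ⊆ pred τ := fun x hx =>
      mem_filter.2 ⟨(mem_filter.1 hx).1, (mem_filter.1 hx).2.trans hlt.le⟩
    have hsub : insert σ (pred σ) ⊆ insert τ (pred τ) :=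
      insert_subset (mem_insert_of_mem (mem_filter.2 ⟨hσ, hlt.le⟩))
        (hpred.trans (subset_insert _ _))
    have hssub : pred σ ⊂ pred τ := (ssubset_iff_of_subset hpred).2
      ⟨τ, mem_filter.2 ⟨hτ, le_rfl⟩, fun hτσ => (mem_filter.1 hτσ).2.not_gt hlt⟩
    have hcard : (#(pred σ) : ℝ) < #(pred τ) := by exact_mod_cast card_lt_card hssub
    have hsup := sup'_mono (fun σ => f σ - t) hsub (insert_nonempty _ _)
    have := mul_lt_mul_of_pos_right hcard hη_pos
    simp only [h]
    linarith
  · obtain ⟨σ, hσ, hσ_eq⟩ := exists_mem_eq_sup' (insert_nonempty s (pred s)) (fun σ => f σ - t)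
    have hσ' : σ ∈ S ∧ g σ ≤ g s := by
      rcases mem_insert.1 hσ with rfl | hσ
      · exact ⟨hs, le_rfl⟩
      · exact mem_filter.1 hσ
    have hlow : f s - t ≤ (insert s (pred s)).sup' (insert_nonempty _ _) (fun σ => f σ - t) :=
      le_sup' (fun σ => f σ - t) (mem_insert_self s _)
    have hcard : (#(pred s) : ℝ) ≤ #S := by exact_mod_cast card_le_card (filter_subset _ _)
    have hslack := hη_slack (σ, s) (mem_product.2 ⟨hσ'.1, hs⟩) hσ'.2
    have := mul_le_mul_of_nonneg_right hcard hη_pos.le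
    have : 0 ≤ (#(pred s) : ℝ) * η := by positivity
    simp only [h, abs_le]
    constructor <;> linarith

end Realization

theorem Finset.eventually_le_imp_lt_of_notMem (D : Finset ℝ) {c : ℝ} (hc : c ∉ D) :
    ∀ᶠ e in 𝓝 c, ∀ d ∈ D, d ≤ e → d < c := by
  refine (eventually_all_finset D).2 fun d hd => ?_
  rcases (ne_of_mem_of_not_mem hd hc).lt_or_gt with hlt | hgt
  · exact Eventually.of_forall fun _ _ => hlt
  · filter_upwards [eventually_lt_nhds hgt] with e he hle
    exact absurd he hle.not_gt

section OrderSets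

variable {W : Type*} {K : SComplex W} {f g h : Finset W → ℝ}

theorem SCIsFiltration.of_lt_imp_lt (hg : SCIsFiltration K g)
    (hgh : ∀ σ ∈ K.faces, ∀ τ ∈ K.faces, g σ < g τ → h σ < h τ) : SCIsFiltration K h := by
  refine ⟨fun σ hσ τ hτ hsub => ?_, fun σ hσ τ hτ heq => ?_⟩
  · rcases (hg.1 σ hσ τ hτ hsub).lt_or_eq with hlt | heq
    · exact (hgh σ hσ τ hτ hlt).le
    · rw [hg.2 σ hσ τ hτ heq]
  · rcases lt_trichotomy (g σ) (g τ) with hlt | heq' | hgt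
    · exact absurd heq (hgh σ hσ τ hτ hlt).ne
    · exact hg.2 σ hσ τ hτ heq'
    · exact absurd heq (hgh τ hτ σ hσ hgt).ne'

theorem inducedRel_eq_of_lt_imp_lt (hg : SCIsFiltration K g)
    (hgh : ∀ σ ∈ K.faces, ∀ τ ∈ K.faces, g σ < g τ → h σ < h τ) :
    inducedRel K g = inducedRel K h := by
  funext σ τ
  simp only [inducedRel]
  refine propext ⟨hgh σ.1 σ.2 τ.1 τ.2, fun hlt => ?_⟩
  by_contra hle
  rcases (not_lt.1 hle).lt_or_eq with hgt | heq
  · exact (hgh τ.1 τ.2 σ.1 σ.2 hgt).not_gt hlt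
  · rw [hg.2 τ.1 τ.2 σ.1 σ.2 heq] at hlt
    exact hlt.false

theorem orderSet_mono {ε δ : ℝ} (hεδ : ε ≤ δ) : OrderSet K f ε ⊆ OrderSet K f δ := by
  rintro r ⟨g, hg, hfg, rfl⟩
  exact ⟨g, hg, fun s hs => (hfg s hs).trans hεδ, rfl⟩

theorem orderSet_subset_of_sub_le_imp_lt {ε t : ℝ}
    (hgap : ∀ σ ∈ K.faces, ∀ τ ∈ K.faces, f σ - f τ ≤ 2 * ε → f σ - f τ < 2 * t) :
    OrderSet K f ε ⊆ OrderSet K f t := by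
  rintro r ⟨g, hg, hfg, rfl⟩
  obtain ⟨h, hgh, hfh⟩ := exists_abs_sub_le_of_sub_lt_two_mul (S := K.faces) (f := f) (g := g)
    fun σ hσ τ hτ hle => hgap σ hσ τ hτ <| by
      have := abs_le.1 (hfg σ hσ); have := abs_le.1 (hfg τ hτ); linarith
  exact ⟨h, hg.of_lt_imp_lt hgh, hfh, inducedRel_eq_of_lt_imp_lt hg hgh⟩

end OrderSets

theorem stmt4_general {V : Type*} [LinearOrder V] (K : SComplex V) (f : Finset V → ℝ)
    (t : ℝ) (ht : 0 < t)
    (hdisc : ∀ ε : ℝ, t < ε → OrderSet K f ε ≠ OrderSet K f t) :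
    ∃ σ ∈ K.faces, ∃ τ ∈ K.faces, σ ≠ τ ∧ 2 * t = |f σ - f τ| := by
  by_contra! hcon
  let D : Finset ℝ := (K.faces ×ˢ K.faces).image fun p => f p.1 - f p.2
  have hD : 2 * t ∉ D := by
    simp only [D, mem_image, mem_product, not_exists, not_and, Prod.forall]
    rintro σ τ ⟨hσ, hτ⟩ heq
    rcases eq_or_ne σ τ with rfl | hne
    · rw [sub_self] at heq; linarith
    · exact hcon σ hσ τ hτ hne (by rw [heq, abs_of_pos (by linarith)])
  have hnear : ∀ᶠ ε in 𝓝 t, ∀ d ∈ D, d ≤ 2 * ε → d < 2 * t :=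
    ((continuous_const.mul continuous_id).tendsto t).eventually
      (D.eventually_le_imp_lt_of_notMem hD)
  obtain ⟨ε, hε, htε⟩ := ((hnear.filter_mono nhdsWithin_le_nhds).and
    (self_mem_nhdsWithin (s := Set.Ioi t) (a := t))).exists
  refine hdisc ε htε (subset_antisymm ?_ (orderSet_mono htε.le))
  exact orderSet_subset_of_sub_le_imp_lt fun σ hσ τ hτ =>
    hε _ (mem_image.2 ⟨(σ, τ), mem_product.2 ⟨hσ, hτ⟩, rfl⟩)

/-- Lemma `LemmaDiscontinuity`: a point of discontinuity of
`ε ↦ Π_ε` is half the distance between two `f`-values. -/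
theorem stmt4 {V : Type*} [LinearOrder V] (K : SComplex V) (f : Finset V → ℝ)
    (hf : SCIsFiltration K f) (t : ℝ) (ht : 0 < t)
    (hdisc : ∀ ε : ℝ, t < ε → OrderSet K f ε ≠ OrderSet K f t) :
    ∃ σ ∈ K.faces, ∃ τ ∈ K.faces, σ ≠ τ ∧ 2 * t = |f σ - f τ| :=
  stmt4_general K f t ht hdisc
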